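/- For connected graphs G and H of orders m and n respectively, max{m·dem(H), n·dem(G)} ≤ dem(G □ H) ≤ m·dem(H) + n·dem(G) − dem(G)·dem(H). -/

import Mathlib

/-!
Distances in a box product add up: `d((a, b), (c, d)) = d_G(a, c) + d_H(b, d)`. Hence a vertex `x`
of `G □ H` monitors the copy `{v} × e` of an edge `e` of `H` iff `x` lies in the fibre `{v} × H`
and `x.2` monitors `e` in `H`: if an endpoint lies outside that fibre, a shortest path that moves
first inside the fibre of one endpoint and then along `G` avoids `{v} × e`; between two points of
the fibre, a shortest path never leaves it and so projects to a shortest path of `H`. Copies of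
edges of `G` behave symmetrically. So a monitoring set of `G □ H` meets each of the `|V|` fibres
`{v} × H` in at least `dem H` vertices and each of the `|W|` fibres `G × {w}` in at least `dem G`
vertices, while `MG × W ∪ V × MH` monitors `G □ H` whenever `MG`, `MH` monitor `G`, `H`.
-/

open SimpleGraph

/-- A set `M` of vertices is a distance-edge-monitoring set of `G`. -/
def demSet {V : Type*} (G : SimpleGraph V) (M : Set V) : Prop :=
  ∀ e ∈ G.edgeSet, ∃ x ∈ M, ∃ y : V, G.dist x y ≠ (G.deleteEdges {e}).dist x y

/-- The distance-edge-monitoring number of `G`. -/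
noncomputable def dem {V : Type*} (G : SimpleGraph V) [Fintype V] : ℕ :=
  sInf {k | ∃ M : Finset V, M.card = k ∧ demSet G ↑M}

namespace SimpleGraph

variable {V V' α β : Type*}

def MonitorsEdge (F : SimpleGraph V) (x : V) (e : Sym2 V) : Prop :=
  ∃ y, F.dist x y ≠ (F.deleteEdges {e}).dist x y

section Distance

variable {F : SimpleGraph V} {F' : SimpleGraph V'}

lemma dist_deleteEdges_eq_iff {x y : V} (h : F.Reachable x y) (e : Sym2 V) :
    (F.deleteEdges {e}).dist x y = F.dist x y ↔
      ∃ w : F.Walk x y, w.length = F.dist x y ∧ e ∉ w.edges := by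
  constructor
  · intro hd
    obtain rfl | hxy := eq_or_ne x y
    · exact ⟨.nil, by simp, by simp⟩
    obtain ⟨w, hw⟩ := (Reachable.of_dist_ne_zero
      (hd ▸ (h.pos_dist_of_ne hxy).ne')).exists_walk_length_eq_dist
    have hsub : ∀ f ∈ w.edges, f ∈ F.edgeSet \ {e} :=
      fun f hf => F.edgeSet_deleteEdges {e} ▸ w.edges_subset_edgeSet hf
    refine ⟨w.transfer F fun f hf => (hsub f hf).1, by simp [hw, hd], ?_⟩
    rw [Walk.edges_transfer]
    exact fun he => (hsub e he).2 rfl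
  · rintro ⟨w, hw, he⟩
    refine le_antisymm ?_ (Reachable.dist_anti (F.deleteEdges_le _) ⟨w.toDeleteEdge e he⟩)
    simpa [hw] using dist_le (w.toDeleteEdge e he)

lemma Iso.dist_eq (φ : F ≃g F') (x y : V) : F'.dist (φ x) (φ y) = F.dist x y := by
  simp only [dist_eq_sInf]
  congr 1
  ext n
  constructor
  · rintro ⟨w, rfl⟩
    exact ⟨(w.map φ.symm.toHom).copy (by simp) (by simp), by simp⟩
  · rintro ⟨w, rfl⟩
    exact ⟨w.map φ.toHom, by simp⟩

def Iso.deleteEdges (φ : F ≃g F') (e : Sym2 V) :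
    F.deleteEdges {e} ≃g F'.deleteEdges {e.map φ} where
  toEquiv := φ.toEquiv
  map_rel_iff' {a b} := by
    rw [deleteEdges_adj, deleteEdges_adj, Set.mem_singleton_iff, Set.mem_singleton_iff,
      show s(φ.toEquiv a, φ.toEquiv b) = s(a, b).map φ from rfl,
      (Sym2.map.injective φ.injective).eq_iff]
    exact and_congr_left' φ.map_adj_iff

lemma Iso.monitorsEdge_iff (φ : F ≃g F') {x : V} {e : Sym2 V} :
    MonitorsEdge F' (φ x) (e.map φ) ↔ MonitorsEdge F x e := by
  simp only [MonitorsEdge, φ.surjective.exists, φ.dist_eq]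
  exact exists_congr fun y => by rw [← (φ.deleteEdges e).dist_eq x y]; rfl

end Distance

section BoxProd

variable {G : SimpleGraph α} {H : SimpleGraph β}

lemma dist_boxProd {x y : α × β} (h₁ : G.Reachable x.1 y.1) (h₂ : H.Reachable x.2 y.2) :
    (G □ H).dist x y = G.dist x.1 y.1 + H.dist x.2 y.2 := by
  have h := edist_boxProd (G := G) (H := H) x y
  rw [← (reachable_boxProd.mpr ⟨h₁, h₂⟩).coe_dist_eq_edist, ← h₁.coe_dist_eq_edist,
    ← h₂.coe_dist_eq_edist] at h
  exact_mod_cast h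

@[simp]
lemma Walk.length_boxProdLeft {a₁ a₂ : α} (b : β) (w : G.Walk a₁ a₂) :
    (w.boxProdLeft H b).length = w.length :=
  w.length_map _

@[simp]
lemma Walk.length_boxProdRight {b₁ b₂ : β} (a : α) (w : H.Walk b₁ b₂) :
    (w.boxProdRight G a).length = w.length :=
  w.length_map _

lemma Walk.edges_boxProdLeft {a₁ a₂ : α} (b : β) (w : G.Walk a₁ a₂) :
    (w.boxProdLeft H b).edges = w.edges.map (Sym2.map (·, b)) :=
  w.edges_map _

lemma Walk.edges_boxProdRight {b₁ b₂ : β} (a : α) (w : H.Walk b₁ b₂) :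
    (w.boxProdRight G a).edges = w.edges.map (Sym2.map (a, ·)) :=
  w.edges_map _

lemma Walk.map_mem_edges_of_length_ofBoxProdLeft_eq_zero [DecidableEq α] [DecidableEq β]
    [DecidableRel G.Adj] [DecidableRel H.Adj] {x y : α × β} (w : (G □ H).Walk x y)
    (hw : w.ofBoxProdLeft.length = 0) {f : Sym2 β} (hf : f ∈ w.ofBoxProdRight.edges) :
    f.map (x.1, ·) ∈ w.edges := by
  induction w with
  | nil => simp [Walk.ofBoxProdRight] at hf
  | @cons x z y h p ih =>
    rcases boxProd_adj.mp h with hG | hH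
    · simp [Walk.ofBoxProdLeft, Or.by_cases, hG] at hw
    · obtain ⟨a, b⟩ := x
      obtain ⟨c, d⟩ := z
      obtain ⟨hbd, rfl : a = c⟩ := hH
      simp only [Walk.ofBoxProdLeft, Walk.ofBoxProdRight, Or.by_cases, SimpleGraph.irrefl, hbd,
        hbd.ne, and_self, ↓reduceDIte, Walk.edges_cons, List.mem_cons] at hw hf ⊢
      rcases hf with rfl | hf
      · simp
      · exact Or.inr (ih hw hf)

lemma dist_deleteEdges_boxProd_of_fst_ne (hG : G.Connected) (hH : H.Connected) {v : α}
    (e : Sym2 β) {x : α × β} (hx : x.1 ≠ v) (y : α × β) :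
    ((G □ H).deleteEdges {e.map (v, ·)}).dist x y = (G □ H).dist x y := by
  obtain ⟨p, hp⟩ := hH.exists_walk_length_eq_dist x.2 y.2
  obtain ⟨q, hq⟩ := hG.exists_walk_length_eq_dist x.1 y.1
  refine (dist_deleteEdges_eq_iff (hG.boxProd hH x y) _).mpr
    ⟨(p.boxProdRight G x.1).append (q.boxProdLeft H y.2), ?_, ?_⟩
  · rw [Walk.length_append, Walk.length_boxProdLeft, Walk.length_boxProdRight,
      dist_boxProd (hG x.1 y.1) (hH x.2 y.2), hp, hq, add_comm]
  · simp only [Walk.edges_append, Walk.edges_boxProdLeft, Walk.edges_boxProdRight,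
      List.mem_append, List.mem_map]
    rintro (⟨f, -, hf⟩ | ⟨g, hg, hg'⟩)
    · induction f using Sym2.ind
      induction e using Sym2.ind
      simp only [Sym2.map_mk, Sym2.eq_iff, Prod.mk.injEq] at hf
      tauto
    · induction g using Sym2.ind
      induction e using Sym2.ind
      have hne := (q.adj_of_mem_edges hg).ne
      simp only [Sym2.map_mk, Sym2.eq_iff, Prod.mk.injEq] at hg'
      grind

lemma dist_deleteEdges_boxProd_fiber_eq_iff (hG : G.Connected) (hH : H.Connected) (v : α)
    (e : Sym2 β) (b d : β) :
    ((G □ H).deleteEdges {e.map (v, ·)}).dist (v, b) (v, d) = (G □ H).dist (v, b) (v, d) ↔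
      (H.deleteEdges {e}).dist b d = H.dist b d := by
  classical
  have hdist : (G □ H).dist (v, b) (v, d) = H.dist b d := by
    simp [dist_boxProd (x := (v, b)) (y := (v, d)) (hG v v) (hH b d)]
  rw [dist_deleteEdges_eq_iff (hG.boxProd hH _ _), dist_deleteEdges_eq_iff (hH b d), hdist]
  constructor
  · rintro ⟨w, hw, he⟩
    have hlen := w.length_boxProd
    have hR : H.dist b d ≤ _ := dist_le w.ofBoxProdRight
    refine ⟨w.ofBoxProdRight, by omega, fun he' => he ?_⟩
    exact w.map_mem_edges_of_length_ofBoxProdLeft_eq_zero (by omega) he'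
  · rintro ⟨w, hw, he⟩
    refine ⟨w.boxProdRight G v, by rw [Walk.length_boxProdRight, hw], ?_⟩
    rwa [Walk.edges_boxProdRight,
      List.mem_map_of_injective (Sym2.map.injective (Prod.mk_right_injective v))]

theorem monitorsEdge_boxProd_right_iff (hG : G.Connected) (hH : H.Connected) {v : α}
    {e : Sym2 β} {x : α × β} :
    MonitorsEdge (G □ H) x (e.map (v, ·)) ↔ x.1 = v ∧ MonitorsEdge H x.2 e := by
  obtain ⟨a, b⟩ := x
  constructor
  · rintro ⟨⟨c, d⟩, hy⟩
    have ha : a = v := by_contra fun ha =>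
      hy (dist_deleteEdges_boxProd_of_fst_ne hG hH e ha _).symm
    have hc : c = v := by_contra fun hc =>
      hy (by rw [dist_comm, dist_comm (G := (G □ H).deleteEdges _),
        dist_deleteEdges_boxProd_of_fst_ne hG hH e hc])
    refine ⟨ha, d, fun h => hy ?_⟩
    rw [ha, hc]
    exact ((dist_deleteEdges_boxProd_fiber_eq_iff hG hH v e b d).mpr h.symm).symm
  · rintro ⟨rfl, d, hd⟩
    exact ⟨(a, d), fun h =>
      hd ((dist_deleteEdges_boxProd_fiber_eq_iff hG hH a e b d).mp h.symm).symm⟩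

theorem monitorsEdge_boxProd_left_iff (hG : G.Connected) (hH : H.Connected) {w : β}
    {e : Sym2 α} {x : α × β} :
    MonitorsEdge (G □ H) x (e.map (·, w)) ↔ x.2 = w ∧ MonitorsEdge G x.1 e := by
  rw [← (boxProdComm G H).monitorsEdge_iff, Sym2.map_map]
  exact monitorsEdge_boxProd_right_iff hH hG

end BoxProd

end SimpleGraph

section Dem

variable {V α β : Type*}

lemma demSet_univ (F : SimpleGraph V) : demSet F Set.univ := by
  intro e he
  induction e using Sym2.ind with | _ p q =>
  refine ⟨p, trivial, q, fun h => ?_⟩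
  rw [dist_eq_one_iff_adj.mpr he, eq_comm, dist_eq_one_iff_adj, deleteEdges_adj] at h
  exact h.2 rfl

lemma dem_le_card [Fintype V] {F : SimpleGraph V} {M : Finset V} (hM : demSet F M) :
    dem F ≤ M.card :=
  Nat.sInf_le ⟨M, rfl, hM⟩

lemma exists_demSet_card_eq_dem [Fintype V] (F : SimpleGraph V) :
    ∃ M : Finset V, M.card = dem F ∧ demSet F M :=
  Nat.sInf_mem (s := {k | ∃ M : Finset V, M.card = k ∧ demSet F M})
    ⟨_, Finset.univ, rfl, by simpa using demSet_univ F⟩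

variable {G : SimpleGraph α} {H : SimpleGraph β}

lemma demSet_image_snd_fiber [DecidableEq α] [DecidableEq β] (hG : G.Connected)
    (hH : H.Connected) {M : Finset (α × β)} (hM : demSet (G □ H) M) (v : α) :
    demSet H ((M.filter fun x : α × β => x.1 = v).image Prod.snd) := by
  intro e he
  obtain ⟨x, hxM, hx⟩ := hM (e.map (v, ·)) ((G.boxProdRight H v).map_mem_edgeSet_iff.mpr he)
  obtain ⟨hxv, hmon⟩ := (monitorsEdge_boxProd_right_iff hG hH).mp hx
  exact ⟨x.2, Finset.mem_image_of_mem _ (Finset.mem_filter.mpr ⟨hxM, hxv⟩), hmon⟩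

lemma demSet_image_fst_fiber [DecidableEq α] [DecidableEq β] (hG : G.Connected)
    (hH : H.Connected) {M : Finset (α × β)} (hM : demSet (G □ H) M) (w : β) :
    demSet G ((M.filter fun x : α × β => x.2 = w).image Prod.fst) := by
  intro e he
  obtain ⟨x, hxM, hx⟩ := hM (e.map (·, w)) ((G.boxProdLeft H w).map_mem_edgeSet_iff.mpr he)
  obtain ⟨hxw, hmon⟩ := (monitorsEdge_boxProd_left_iff hG hH).mp hx
  exact ⟨x.1, Finset.mem_image_of_mem _ (Finset.mem_filter.mpr ⟨hxM, hxw⟩), hmon⟩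

lemma card_mul_dem_right_le_dem_boxProd [Fintype α] [Fintype β] (hG : G.Connected)
    (hH : H.Connected) : Fintype.card α * dem H ≤ dem (G □ H) := by
  classical
  obtain ⟨M, hcard, hM⟩ := exists_demSet_card_eq_dem (G □ H)
  rw [← hcard, mul_comm]
  exact Finset.mul_card_image_le_card_of_maps_to (t := Finset.univ) (fun _ _ => Finset.mem_univ _)
    _ fun v _ => (dem_le_card (demSet_image_snd_fiber hG hH hM v)).trans Finset.card_image_le

lemma card_mul_dem_left_le_dem_boxProd [Fintype α] [Fintype β] (hG : G.Connected)
    (hH : H.Connected) : Fintype.card β * dem G ≤ dem (G □ H) := by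
  classical
  obtain ⟨M, hcard, hM⟩ := exists_demSet_card_eq_dem (G □ H)
  rw [← hcard, mul_comm]
  exact Finset.mul_card_image_le_card_of_maps_to (t := Finset.univ) (fun _ _ => Finset.mem_univ _)
    _ fun w _ => (dem_le_card (demSet_image_fst_fiber hG hH hM w)).trans Finset.card_image_le

lemma demSet_boxProd (hG : G.Connected) (hH : H.Connected) {MG : Set α} {MH : Set β}
    (hMG : demSet G MG) (hMH : demSet H MH) :
    demSet (G □ H) (MG ×ˢ Set.univ ∪ Set.univ ×ˢ MH) := by
  intro e he
  induction e using Sym2.ind with | _ x y =>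
  obtain ⟨a, b⟩ := x
  obtain ⟨c, d⟩ := y
  rcases boxProd_adj.mp he with ⟨hac, rfl : b = d⟩ | ⟨hbd, rfl : a = c⟩
  · obtain ⟨a', ha', hmon⟩ := hMG s(a, c) hac
    exact ⟨(a', b), Or.inl ⟨ha', trivial⟩,
      (monitorsEdge_boxProd_left_iff hG hH (e := s(a, c))).mpr ⟨rfl, hmon⟩⟩
  · obtain ⟨b', hb', hmon⟩ := hMH s(b, d) hbd
    exact ⟨(a, b'), Or.inr ⟨trivial, hb'⟩,
      (monitorsEdge_boxProd_right_iff hG hH (e := s(b, d))).mpr ⟨rfl, hmon⟩⟩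

lemma dem_boxProd_add_mul_le [Fintype α] [Fintype β] (hG : G.Connected) (hH : H.Connected) :
    dem (G □ H) + dem G * dem H ≤ Fintype.card α * dem H + Fintype.card β * dem G := by
  classical
  obtain ⟨MG, hMG_card, hMG⟩ := exists_demSet_card_eq_dem G
  obtain ⟨MH, hMH_card, hMH⟩ := exists_demSet_card_eq_dem H
  have hdem := dem_le_card (M := MG ×ˢ Finset.univ ∪ Finset.univ ×ˢ MH) (by
    push_cast
    exact demSet_boxProd hG hH hMG hMH)
  have hcard := Finset.card_union_add_card_inter (MG ×ˢ Finset.univ) (Finset.univ ×ˢ MH)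
  rw [Finset.product_inter_product, Finset.inter_univ, Finset.univ_inter] at hcard
  simp only [Finset.card_product, Finset.card_univ, hMG_card, hMH_card] at hcard
  linarith

end Dem

theorem stmt_13 {V W : Type*} [Fintype V] [Fintype W]
    (G : SimpleGraph V) (H : SimpleGraph W) (hG : G.Connected) (hH : H.Connected) :
    max (Fintype.card V * dem H) (Fintype.card W * dem G) ≤ dem (G □ H) ∧
    dem (G □ H) ≤
      Fintype.card V * dem H + Fintype.card W * dem G - dem G * dem H :=
  ⟨max_le (card_mul_dem_right_le_dem_boxProd hG hH) (card_mul_dem_left_le_dem_boxProd hG hH),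
    Nat.le_sub_of_add_le (dem_boxProd_add_mul_le hG hH)⟩
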